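/- Let m ≥ 1, X a real d×m matrix with columns x₁,…,x_m, y ∈ {−1,+1}^m, Y = diag(y), e ∈ ℝ^m the all-ones vector, λ₁ ≥ 0, λ₂ ∈ ℝ, C > 0. Set A = 2λ₁(m I − y yᵀ)/m², G = XᵀX, assume I + A G is invertible, let H = Y G (I + A G)⁻¹ Y with entries h_ij, assume H is symmetric positive semidefinite and h_ii > 0 for all i, and set q = (λ₂/m) H e − e and f(α) = (1/2) αᵀHα + qᵀα. Let α* be a minimizer of f over the box B = {α : 0 ≤ α ≤ (C/m)e}, for each i let α^i be a minimizer of f over B ∩ {α : α_i = 0}, and define w(α) = X (I + A G)⁻¹ Y (α + (λ₂/m) e). Then the number of indices i ∈ {1,…,m} with y_i x_iᵀ w(α^i) < 0 is at most Σ_{i : 0 < α*_i < C/m} α*_i h_ii + #{ i : α*_i = C/m }. -/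

import Mathlib

open Matrix Set Filter Topology Function Finset

/-! With `g(α) = Hα + q` the gradient of `f`, one has `yᵢ xᵢᵀ w(α) = g(α)ᵢ + 1`, so example `i`
is a leave-one-out error exactly when `g(αⁱ)ᵢ < -1`. For `δ = α* - αⁱ`, the first-order optimality
conditions of `α*` on the box and of `αⁱ` on its face `αᵢ = 0` give `δᵀHδ ≤ -α*ᵢ g(αⁱ)ᵢ`; if
moreover `α*ᵢ < C/m`, optimality of `α*` in direction `eᵢ` gives `g(α*)ᵢ ≥ 0`, hence
`δᵀHδ ≤ α*ᵢ (Hδ)ᵢ` and `(Hδ)ᵢ = g(α*)ᵢ - g(αⁱ)ᵢ > 1`. Cauchy–Schwarz for the semi-inner product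
`H`, `(Hδ)ᵢ² ≤ hᵢᵢ δᵀHδ`, then forces `α*ᵢ hᵢᵢ > 1`. So every leave-one-out error either has
`α*ᵢ = C/m` or contributes at least `1` to `∑ α*ᵢ hᵢᵢ`. -/

variable {ι : Type*}

namespace Matrix

variable {H : Matrix ι ι ℝ}

lemma PosSemidef.isSymm (hH : H.PosSemidef) : H.IsSymm :=
  isHermitian_iff_isSymm.mp hH.isHermitian

variable [Fintype ι]

lemma IsSymm.dotProduct_mulVec_comm (hH : H.IsSymm) (u v : ι → ℝ) :
    u ⬝ᵥ (H *ᵥ v) = v ⬝ᵥ (H *ᵥ u) := by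
  rw [dotProduct_mulVec, ← mulVec_transpose, hH.eq, dotProduct_comm]

lemma IsSymm.add_smul_dotProduct_mulVec_add_smul (hH : H.IsSymm) (u v : ι → ℝ) (t : ℝ) :
    (u + t • v) ⬝ᵥ (H *ᵥ (u + t • v))
      = u ⬝ᵥ (H *ᵥ u) + 2 * t * (v ⬝ᵥ (H *ᵥ u)) + t ^ 2 * (v ⬝ᵥ (H *ᵥ v)) := by
  simp only [mulVec_add, mulVec_smul, dotProduct_add, add_dotProduct, dotProduct_smul,
    smul_dotProduct, smul_eq_mul]
  rw [hH.dotProduct_mulVec_comm u v]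
  ring

lemma PosSemidef.dotProduct_mulVec_sq_le (hH : H.PosSemidef) (u v : ι → ℝ) :
    (u ⬝ᵥ (H *ᵥ v)) ^ 2 ≤ (u ⬝ᵥ (H *ᵥ u)) * (v ⬝ᵥ (H *ᵥ v)) := by
  have hdisc : discrim (v ⬝ᵥ (H *ᵥ v)) (2 * (u ⬝ᵥ (H *ᵥ v))) (u ⬝ᵥ (H *ᵥ u)) ≤ 0 := by
    refine discrim_le_zero fun t => ?_
    have h := hH.dotProduct_mulVec_nonneg (u + t • v)
    rw [star_trivial, hH.isSymm.add_smul_dotProduct_mulVec_add_smul,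
      hH.isSymm.dotProduct_mulVec_comm v u] at h
    linarith
  rw [discrim] at hdisc
  linarith

lemma PosSemidef.mulVec_apply_sq_le [DecidableEq ι] (hH : H.PosSemidef) (v : ι → ℝ) (i : ι) :
    (H *ᵥ v) i ^ 2 ≤ H i i * (v ⬝ᵥ (H *ᵥ v)) := by
  simpa [single_dotProduct, mulVec_single] using hH.dotProduct_mulVec_sq_le (Pi.single i 1) v

end Matrix

lemma Function.update_mem_Icc [DecidableEq ι] {β : Type*} [Preorder β] {a l u : ι → β} {i : ι}
    {x : β} (ha : a ∈ Icc l u) (hx : x ∈ Icc (l i) (u i)) : update a i x ∈ Icc l u :=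
  ⟨le_update_iff.2 ⟨hx.1, fun j _ => ha.1 j⟩, update_le_iff.2 ⟨hx.2, fun j _ => ha.2 j⟩⟩

lemma Function.update_sub_self [DecidableEq ι] (a : ι → ℝ) (i : ι) (x : ℝ) :
    update a i x - a = Pi.single i (x - a i) := by
  ext j
  rcases eq_or_ne j i with rfl | hj <;> simp [*]

lemma nonneg_of_forall_mul_add_sq_nonneg {c b : ℝ}
    (h : ∀ t ∈ Ioc (0 : ℝ) 1, 0 ≤ t * c + t ^ 2 * b) : 0 ≤ c := by
  have hlim : Tendsto (fun t => c + t * b) (𝓝[>] 0) (𝓝 c) := by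
    have : Continuous fun t : ℝ => c + t * b := by fun_prop
    exact (this.tendsto' 0 c (by simp)).mono_left nhdsWithin_le_nhds
  refine ge_of_tendsto hlim ?_
  filter_upwards [Ioc_mem_nhdsGT one_pos] with t ht
  exact nonneg_of_mul_nonneg_right (by linear_combination h t ht) ht.1

noncomputable def quadraticObjective [Fintype ι] (H : Matrix ι ι ℝ) (q α : ι → ℝ) : ℝ :=
  1 / 2 * (α ⬝ᵥ (H *ᵥ α)) + q ⬝ᵥ α

section QuadraticObjective

variable [Fintype ι] {H : Matrix ι ι ℝ} {q a b u : ι → ℝ}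

lemma quadraticObjective_add_smul (hH : H.IsSymm) (a v : ι → ℝ) (t : ℝ) :
    quadraticObjective H q (a + t • v)
      = quadraticObjective H q a + t * ((H *ᵥ a + q) ⬝ᵥ v) + t ^ 2 / 2 * (v ⬝ᵥ (H *ᵥ v)) := by
  simp only [quadraticObjective, hH.add_smul_dotProduct_mulVec_add_smul, dotProduct_add,
    add_dotProduct, dotProduct_smul, smul_eq_mul, dotProduct_comm (H *ᵥ a) v]
  ring

theorem IsMinOn.quadraticObjective_gradient_nonneg (hH : H.IsSymm) {S : Set (ι → ℝ)}
    (hS : Convex ℝ S) (hmin : IsMinOn (quadraticObjective H q) S a) (ha : a ∈ S) (hb : b ∈ S) :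
    0 ≤ (H *ᵥ a + q) ⬝ᵥ (b - a) := by
  refine nonneg_of_forall_mul_add_sq_nonneg (b := ((b - a) ⬝ᵥ (H *ᵥ (b - a))) / 2) fun t ht => ?_
  have h := isMinOn_iff.1 hmin _ (hS.add_smul_sub_mem ha hb (Ioc_subset_Icc_self ht))
  rw [quadraticObjective_add_smul hH] at h
  linarith

variable [DecidableEq ι] {i : ι}

theorem leaveOneOut_sub_dotProduct_mulVec_sub_le (hH : H.IsSymm)
    (ha_min : IsMinOn (quadraticObjective H q) (Icc 0 u) a) (ha : a ∈ Icc 0 u)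
    (hb_min : IsMinOn (quadraticObjective H q) (Icc 0 u ∩ {x | x i = 0}) b)
    (hb : b ∈ Icc 0 u ∩ {x | x i = 0}) :
    (a - b) ⬝ᵥ (H *ᵥ (a - b)) ≤ -(a i * (H *ᵥ b + q) i) := by
  have hconv : Convex ℝ (Icc 0 u ∩ {x | x i = 0}) :=
    (convex_Icc 0 u).inter (convex_hyperplane (LinearMap.proj i).isLinear 0)
  have ha₀ : update a i 0 ∈ Icc 0 u ∩ {x | x i = 0} :=
    ⟨update_mem_Icc ha ⟨le_rfl, ha.1 i |>.trans (ha.2 i)⟩, update_self i 0 a⟩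
  have hab := ha_min.quadraticObjective_gradient_nonneg hH (convex_Icc 0 u) ha hb.1
  have hba := hb_min.quadraticObjective_gradient_nonneg hH hconv hb ha₀
  have hsplit : update a i 0 - b = (a - b) + Pi.single i (-a i) := by
    rw [← zero_sub, ← update_sub_self]; abel
  have hHab : H *ᵥ (a - b) = (H *ᵥ a + q) - (H *ᵥ b + q) := by
    rw [mulVec_sub]; abel
  rw [hsplit, dotProduct_add, dotProduct_single] at hba
  rw [← neg_sub a b, dotProduct_neg] at hab
  rw [hHab, dotProduct_sub, dotProduct_comm (a - b), dotProduct_comm (a - b)]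
  linarith

theorem one_lt_mul_diag_of_leaveOneOut_error (hH : H.PosSemidef)
    (ha_min : IsMinOn (quadraticObjective H q) (Icc 0 u) a) (ha : a ∈ Icc 0 u)
    (hb_min : IsMinOn (quadraticObjective H q) (Icc 0 u ∩ {x | x i = 0}) b)
    (hb : b ∈ Icc 0 u ∩ {x | x i = 0}) (herr : (H *ᵥ b + q) i < -1) (hai : a i < u i) :
    1 < a i * H i i := by
  have hgrad_a : 0 ≤ (H *ᵥ a + q) i := by
    have h := ha_min.quadraticObjective_gradient_nonneg hH.isSymm (convex_Icc 0 u) ha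
      (update_mem_Icc ha ⟨ha.1 i |>.trans hai.le, le_rfl⟩)
    rw [update_sub_self, dotProduct_single] at h
    exact nonneg_of_mul_nonneg_left h (sub_pos.2 hai)
  set r := (H *ᵥ (a - b)) i
  have hr : 1 < r := by
    simp only [r, mulVec_sub, Pi.sub_apply, Pi.add_apply] at herr hgrad_a ⊢
    linarith
  have hai₀ : 0 ≤ a i := ha.1 i
  have henergy : (a - b) ⬝ᵥ (H *ᵥ (a - b)) ≤ a i * r := by
    have h := leaveOneOut_sub_dotProduct_mulVec_sub_le hH.isSymm ha_min ha hb_min hb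
    have hr_eq : r = (H *ᵥ a + q) i - (H *ᵥ b + q) i := by simp [r, mulVec_sub]
    nlinarith [mul_nonneg hai₀ hgrad_a]
  have hrr : r * r ≤ (a i * H i i) * r := calc
    r * r = r ^ 2 := by ring
    _ ≤ H i i * ((a - b) ⬝ᵥ (H *ᵥ (a - b))) := hH.mulVec_apply_sq_le (a - b) i
    _ ≤ H i i * (a i * r) := mul_le_mul_of_nonneg_left henergy hH.diag_nonneg
    _ = (a i * H i i) * r := by ring
  exact hr.trans_le (le_of_mul_le_mul_right hrr (one_pos.trans hr))

theorem eq_or_one_le_mul_diag_of_leaveOneOut_error (hH : H.PosSemidef)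
    (ha_min : IsMinOn (quadraticObjective H q) (Icc 0 u) a) (ha : a ∈ Icc 0 u)
    (hb_min : IsMinOn (quadraticObjective H q) (Icc 0 u ∩ {x | x i = 0}) b)
    (hb : b ∈ Icc 0 u ∩ {x | x i = 0}) (herr : (H *ᵥ b + q) i < -1) :
    a i = u i ∨ (0 < a i ∧ a i < u i) ∧ 1 ≤ a i * H i i := by
  refine (ha.2 i).eq_or_lt.imp id fun hai => ?_
  have h := one_lt_mul_diag_of_leaveOneOut_error hH ha_min ha hb_min hb herr hai
  have hai₀ : a i ≠ 0 := by rintro h₀; norm_num [h₀] at h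
  exact ⟨⟨(ha.1 i).lt_of_ne' hai₀, hai⟩, h.le⟩

end QuadraticObjective

lemma card_filter_le_sum_filter_add_card_filter {s : Finset ι} {P Q R : ι → Prop}
    [DecidablePred P] [DecidablePred Q] [DecidablePred R] {c : ι → ℝ}
    (hc : ∀ i ∈ s, Q i → 0 ≤ c i) (h : ∀ i ∈ s, P i → R i ∨ Q i ∧ 1 ≤ c i) :
    (#(s.filter P) : ℝ) ≤ ∑ i ∈ s.filter Q, c i + #(s.filter R) := by
  rw [Finset.natCast_card_filter, Finset.natCast_card_filter, Finset.sum_filter,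
    ← Finset.sum_add_distrib]
  refine Finset.sum_le_sum fun i hi => ?_
  have := hc i hi
  have := h i hi
  split_ifs <;> grind

lemma mul_col_dotProduct_mulVec {κ : Type*} [Fintype ι] [Fintype κ] [DecidableEq ι]
    (X : Matrix κ ι ℝ) (y : ι → ℝ) (K : Matrix ι ι ℝ) (z : ι → ℝ) (i : ι) :
    y i * ((fun j => X j i) ⬝ᵥ (X *ᵥ (K *ᵥ (diagonal y *ᵥ z))))
      = ((diagonal y * (Xᵀ * X) * K * diagonal y) *ᵥ z) i := by
  change y i * (Xᵀ *ᵥ (X *ᵥ (K *ᵥ (diagonal y *ᵥ z)))) i = _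
  simp only [mulVec_mulVec, ← mulVec_diagonal, Matrix.mul_assoc]

theorem stmt_16_general {d m : ℕ} (X : Matrix (Fin d) (Fin m) ℝ)
    (y : Fin m → ℝ)
    (Y : Matrix (Fin m) (Fin m) ℝ) (hY : Y = Matrix.diagonal y)
    (e : Fin m → ℝ) (he : e = fun _ => 1)
    (lam₂ C : ℝ)
    (A G H : Matrix (Fin m) (Fin m) ℝ)
    (hG : G = Xᵀ * X)
    (hH : H = Y * G * (1 + A * G)⁻¹ * Y)
    (hHpsd : H.PosSemidef)
    (q : Fin m → ℝ) (hq : q = (lam₂ / m) • (H *ᵥ e) - e)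
    (f : (Fin m → ℝ) → ℝ)
    (hf : ∀ α, f α = (1 / 2) * (α ⬝ᵥ (H *ᵥ α)) + q ⬝ᵥ α)
    (B : Set (Fin m → ℝ))
    (hB : B = {α | ∀ j, 0 ≤ α j ∧ α j ≤ C / m})
    (αstar : Fin m → ℝ) (hstar : αstar ∈ B ∧ ∀ α ∈ B, f αstar ≤ f α)
    (αi : Fin m → (Fin m → ℝ))
    (hαi : ∀ i, (αi i ∈ B ∧ αi i i = 0) ∧ ∀ α ∈ B, α i = 0 → f (αi i) ≤ f α)
    (w : (Fin m → ℝ) → (Fin d → ℝ))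
    (hw : ∀ α, w α = X *ᵥ ((1 + A * G)⁻¹ *ᵥ (Y *ᵥ (α + (lam₂ / m) • e)))) :
    ((Finset.univ.filter fun i : Fin m =>
        y i * ((fun j => X j i) ⬝ᵥ w (αi i)) < 0).card : ℝ)
      ≤ ∑ i ∈ Finset.univ.filter (fun i : Fin m => 0 < αstar i ∧ αstar i < C / m),
            αstar i * H i i
        + ((Finset.univ.filter fun i : Fin m => αstar i = C / m).card : ℝ) := by
  obtain rfl : f = quadraticObjective H q := funext hf
  obtain rfl : B = Icc 0 fun _ => C / m := by
    rw [hB]; ext α; simp [Pi.le_def, forall_and]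
  have hmargin : ∀ α i, y i * ((fun j => X j i) ⬝ᵥ w α) = (H *ᵥ α + q) i + 1 := by
    intro α i
    rw [hw, hY, mul_col_dotProduct_mulVec, ← hG, ← hY, ← hH, hq, he]
    simp only [mulVec_add, mulVec_smul, Pi.add_apply, Pi.smul_apply, smul_eq_mul, Pi.sub_apply]
    ring
  refine card_filter_le_sum_filter_add_card_filter
    (fun i _ hi => mul_nonneg hi.1.le hHpsd.diag_nonneg) fun i _ herr => ?_
  rw [hmargin] at herr
  exact eq_or_one_le_mul_diag_of_leaveOneOut_error hHpsd (isMinOn_iff.2 hstar.2) hstar.1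
    (isMinOn_iff.2 fun α hα => (hαi i).2 α hα.1 hα.2) (hαi i).1 (by linarith)

/-- The deterministic leave-one-out bound from the proof of Theorem 2 of the paper: for the
dual kernel ODM^L problem `min f(α) = (1/2) αᵀHα + qᵀα` over the box `0 ≤ α ≤ (C/m)e`, with
`α*` a minimizer over the box, `αⁱ` a minimizer with the extra constraint `αᵢ = 0`, and
`w(α) = X (I + A G)⁻¹ Y (α + (λ₂/m)e)` the recovered primal weight vector, the number of
leave-one-out errors `#{i : yᵢ xᵢᵀ w(αⁱ) < 0}` is at most
`∑_{0 < α*ᵢ < C/m} α*ᵢ hᵢᵢ + #{i : α*ᵢ = C/m}`. -/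
theorem stmt_16 {d m : ℕ} (hm : 1 ≤ m) (X : Matrix (Fin d) (Fin m) ℝ)
    (y : Fin m → ℝ) (hy : ∀ i, y i = 1 ∨ y i = -1)
    (Y : Matrix (Fin m) (Fin m) ℝ) (hY : Y = Matrix.diagonal y)
    (e : Fin m → ℝ) (he : e = fun _ => 1)
    (lam₁ lam₂ C : ℝ) (hlam₁ : 0 ≤ lam₁) (hC : 0 < C)
    (A G H : Matrix (Fin m) (Fin m) ℝ)
    (hA : A = (2 * lam₁ / (m : ℝ) ^ 2) • ((m : ℝ) • 1 - vecMulVec y y))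
    (hG : G = Xᵀ * X)
    (hinv : IsUnit (1 + A * G))
    (hH : H = Y * G * (1 + A * G)⁻¹ * Y)
    (hHpsd : H.PosSemidef) (hdiag : ∀ i, 0 < H i i)
    (q : Fin m → ℝ) (hq : q = (lam₂ / m) • (H *ᵥ e) - e)
    (f : (Fin m → ℝ) → ℝ)
    (hf : ∀ α, f α = (1 / 2) * (α ⬝ᵥ (H *ᵥ α)) + q ⬝ᵥ α)
    (B : Set (Fin m → ℝ))
    (hB : B = {α | ∀ j, 0 ≤ α j ∧ α j ≤ C / m})
    (αstar : Fin m → ℝ) (hstar : αstar ∈ B ∧ ∀ α ∈ B, f αstar ≤ f α)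
    (αi : Fin m → (Fin m → ℝ))
    (hαi : ∀ i, (αi i ∈ B ∧ αi i i = 0) ∧ ∀ α ∈ B, α i = 0 → f (αi i) ≤ f α)
    (w : (Fin m → ℝ) → (Fin d → ℝ))
    (hw : ∀ α, w α = X *ᵥ ((1 + A * G)⁻¹ *ᵥ (Y *ᵥ (α + (lam₂ / m) • e)))) :
    ((Finset.univ.filter fun i : Fin m =>
        y i * ((fun j => X j i) ⬝ᵥ w (αi i)) < 0).card : ℝ)
      ≤ ∑ i ∈ Finset.univ.filter (fun i : Fin m => 0 < αstar i ∧ αstar i < C / m),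
            αstar i * H i i
        + ((Finset.univ.filter fun i : Fin m => αstar i = C / m).card : ℝ) :=
  stmt_16_general X y Y hY e he lam₂ C A G H hG hH hHpsd q hq f hf B hB αstar hstar αi hαi w hw
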